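/- arXiv:1906.10614 — 2 statements merged into one kernel-verified Lean document; each statement's English description precedes it below -/
import Mathlib

section
/- Let T be a k-th order n-dimensional nonnegative tensor. Then the spectral radius of T is bounded between the minimum and the maximum row sum: min_i Σ_{i_2,...,i_k} T_{i i_2 ... i_k} ≤ ρ(T) ≤ max_i Σ_{i_2,...,i_k} T_{i i_2 ... i_k}. -/
/-!
The upper bound holds for every eigenvalue: read the eigen-equation at a coordinate of maximal
modulus. For the lower bound we need a real eigenvalue at least the minimal row sum `r`; the
uniform vector `u` satisfies `r u^[d] ≤ T u^d`, so it suffices that the Collatz–Wielandt value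
`sup {μ | μ x^[d] ≤ T x^d for some x in the simplex}` is an eigenvalue. For a positive tensor the
supremum is attained by compactness, and the maximiser is an eigenpair: if one inequality were
strict, raising that coordinate of `x` slightly would make all of them strict and `μ` could be
increased. A nonnegative tensor is the limit of the positive tensors `T + ε`, and the eigenpairs
pass to the limit, again by compactness.
-/

open Filter Set Topology

variable {ι : Type*} [Fintype ι] {d : ℕ}

/-- `(T x^d)_i` for a tensor `T` of order `d + 1`, indexed as `T i j` with `j` the tuple of
trailing indices. -/
def tensorApply {R : Type*} [CommSemiring R] (T : ι → (Fin d → ι) → R) (x : ι → R) (i : ι) :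
    R :=
  ∑ j, T i j * ∏ l, x (j l)

section CommSemiring

variable {R : Type*} [CommSemiring R] (T : ι → (Fin d → ι) → R)

lemma tensorApply_smul (c : R) (x : ι → R) (i : ι) :
    tensorApply T (c • x) i = c ^ d * tensorApply T x i := by
  simp only [tensorApply, Pi.smul_apply, smul_eq_mul, Finset.prod_mul_distrib,
    Finset.prod_const, Finset.card_univ, Fintype.card_fin, Finset.mul_sum]
  exact Finset.sum_congr rfl fun j _ => by ring

lemma tensorApply_const (c : R) (i : ι) :
    tensorApply T (fun _ => c) i = (∑ j, T i j) * c ^ d := by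
  simp [tensorApply, Finset.sum_mul]

end CommSemiring

lemma norm_tensorApply_le {𝕜 : Type*} [NormedField 𝕜] (T : ι → (Fin d → ι) → 𝕜)
    {x : ι → 𝕜} {c : ℝ} (hx : ∀ m, ‖x m‖ ≤ c) (i : ι) :
    ‖tensorApply T x i‖ ≤ (∑ j, ‖T i j‖) * c ^ d :=
  calc ‖tensorApply T x i‖ ≤ ∑ j, ‖T i j * ∏ l, x (j l)‖ := norm_sum_le _ _
    _ = ∑ j, ‖T i j‖ * ∏ l, ‖x (j l)‖ := by simp only [norm_mul, norm_prod]
    _ ≤ ∑ j, ‖T i j‖ * ∏ _l : Fin d, c := by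
        gcongr with j _ l _
        exact hx (j l)
    _ = (∑ j, ‖T i j‖) * c ^ d := by simp [Finset.sum_mul]

lemma exists_norm_le_of_eigen {𝕜 : Type*} [NormedField 𝕜] {T : ι → (Fin d → ι) → 𝕜}
    {x : ι → 𝕜} {μ : 𝕜} (hx : x ≠ 0) (heig : ∀ i, tensorApply T x i = μ * x i ^ d) :
    ∃ i, ‖μ‖ ≤ ∑ j, ‖T i j‖ := by
  obtain ⟨j, hj⟩ := Function.ne_iff.1 hx
  have : Nonempty ι := ⟨j⟩
  obtain ⟨i, hi⟩ := Finite.exists_max fun m => ‖x m‖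
  have hxi : 0 < ‖x i‖ := (norm_pos_iff.2 hj).trans_le (hi j)
  refine ⟨i, le_of_mul_le_mul_right ?_ (pow_pos hxi d)⟩
  calc ‖μ‖ * ‖x i‖ ^ d = ‖tensorApply T x i‖ := by rw [heig i, norm_mul, norm_pow]
    _ ≤ (∑ j, ‖T i j‖) * ‖x i‖ ^ d := norm_tensorApply_le T hi i

section Real

variable {T T' : ι → (Fin d → ι) → ℝ} {x y : ι → ℝ}

lemma continuous_tensorApply (T : ι → (Fin d → ι) → ℝ) (i : ι) :
    Continuous fun x => tensorApply T x i := by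
  unfold tensorApply
  fun_prop

lemma tensorApply_mono (hT : ∀ i j, 0 ≤ T i j) (hx : 0 ≤ x) (hxy : x ≤ y) (i : ι) :
    tensorApply T x i ≤ tensorApply T y i :=
  Finset.sum_le_sum fun j _ => mul_le_mul_of_nonneg_left
    (Finset.prod_le_prod (fun l _ => hx (j l)) fun l _ => hxy (j l)) (hT i j)

lemma tensorApply_mono_left (hTT' : ∀ i j, T i j ≤ T' i j) (hx : 0 ≤ x) (i : ι) :
    tensorApply T x i ≤ tensorApply T' x i :=
  Finset.sum_le_sum fun j _ =>
    mul_le_mul_of_nonneg_right (hTT' i j) (Finset.prod_nonneg fun l _ => hx (j l))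

lemma tensorApply_lt_tensorApply (hT : ∀ i j, 0 < T i j) (hd : d ≠ 0) (hx : 0 ≤ x)
    (hxy : x ≤ y) {i₀ : ι} (hlt : x i₀ < y i₀) (i : ι) :
    tensorApply T x i < tensorApply T y i := by
  refine Finset.sum_lt_sum (fun j _ => mul_le_mul_of_nonneg_left
    (Finset.prod_le_prod (fun l _ => hx (j l)) fun l _ => hxy (j l)) (hT i j).le)
    ⟨fun _ => i₀, Finset.mem_univ _, mul_lt_mul_of_pos_left ?_ (hT i _)⟩
  simpa using pow_lt_pow_left₀ hlt (hx i₀) hd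

lemma tensorApply_le_of_le (hT : ∀ i j, 0 ≤ T i j) (hx : 0 ≤ x) {c : ℝ} (hc : ∀ m, x m ≤ c)
    (i : ι) : tensorApply T x i ≤ (∑ j, T i j) * c ^ d :=
  tensorApply_const T c i ▸ tensorApply_mono hT hx hc i

lemma exists_le_rowSum_of_le_tensorApply (hT : ∀ i j, 0 ≤ T i j) (hx : 0 ≤ x) (hx₀ : x ≠ 0)
    {μ : ℝ} (hμ : ∀ i, μ * x i ^ d ≤ tensorApply T x i) : ∃ i, μ ≤ ∑ j, T i j := by
  obtain ⟨j, hj⟩ := Function.ne_iff.1 hx₀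
  have : Nonempty ι := ⟨j⟩
  obtain ⟨i, hi⟩ := Finite.exists_max x
  have hxi : 0 < x i := ((hx j).lt_of_ne (Ne.symm hj)).trans_le (hi j)
  exact ⟨i, le_of_mul_le_mul_right ((hμ i).trans (tensorApply_le_of_le hT hx hi i))
    (pow_pos hxi d)⟩

lemma ne_zero_of_mem_stdSimplex (hx : x ∈ stdSimplex ℝ ι) : x ≠ 0 := by
  rintro rfl
  simpa using hx.2

lemma inv_sum_smul_mem_stdSimplex (hy : 0 ≤ y) (hs : 0 < ∑ i, y i) :
    (∑ i, y i)⁻¹ • y ∈ stdSimplex ℝ ι :=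
  ⟨fun i => mul_nonneg (inv_nonneg.2 hs.le) (hy i), by
    simp [← Finset.mul_sum, hs.ne']⟩

def collatzWielandtSet (T : ι → (Fin d → ι) → ℝ) : Set (ℝ × (ι → ℝ)) :=
  {p | p.2 ∈ stdSimplex ℝ ι ∧ ∀ i, p.1 * p.2 i ^ d ≤ tensorApply T p.2 i}

lemma isClosed_collatzWielandtSet (T : ι → (Fin d → ι) → ℝ) :
    IsClosed (collatzWielandtSet T) := by
  simp only [collatzWielandtSet, ofPred_and, ofPred_forall]
  exact ((isClosed_stdSimplex ℝ ι).preimage continuous_snd).inter <| isClosed_iInter fun i =>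
    isClosed_le (by fun_prop) ((continuous_tensorApply T i).comp continuous_snd)

lemma exists_isMaxOn_collatzWielandtSet (hT : ∀ i j, 0 ≤ T i j) {q : ℝ × (ι → ℝ)}
    (hq : q ∈ collatzWielandtSet T) :
    ∃ p ∈ collatzWielandtSet T, q.1 ≤ p.1 ∧ IsMaxOn Prod.fst (collatzWielandtSet T) p := by
  obtain ⟨M, hM⟩ := (finite_range fun i => ∑ j, T i j).bddAbove
  have hbound : ∀ p ∈ collatzWielandtSet T, p.1 ≤ M := fun p hp =>
    have ⟨i, hi⟩ := exists_le_rowSum_of_le_tensorApply hT hp.1.1 (ne_zero_of_mem_stdSimplex hp.1)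
      hp.2
    hi.trans (hM ⟨i, rfl⟩)
  have hK : IsCompact (collatzWielandtSet T ∩ {p | q.1 ≤ p.1}) :=
    (isCompact_Icc.prod (isCompact_stdSimplex ℝ ι)).of_isClosed_subset
      ((isClosed_collatzWielandtSet T).inter (isClosed_le continuous_const continuous_fst))
      fun p hp => ⟨⟨hp.2, hbound p hp.1⟩, hp.1.1⟩
  obtain ⟨p, ⟨hp, hqp⟩, hmax⟩ := hK.exists_isMaxOn ⟨q, hq, le_refl q.1⟩ continuous_fst.continuousOn
  refine ⟨p, hp, hqp, isMaxOn_iff.2 fun r hr => ?_⟩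
  rcases le_or_gt q.1 r.1 with h | h
  · exact isMaxOn_iff.1 hmax r ⟨hr, h⟩
  · exact h.le.trans hqp

lemma exists_pos_of_eventually_nhds_zero {P : ℝ → Prop} (h : ∀ᶠ t in 𝓝 0, P t) :
    ∃ t, 0 < t ∧ P t :=
  ((eventually_mem_nhdsWithin : ∀ᶠ t in 𝓝[>] (0 : ℝ), t ∈ Ioi 0).and
    (nhdsWithin_le_nhds h)).exists

lemma exists_mem_collatzWielandtSet_gt (hy : 0 ≤ y) (hs : 0 < ∑ m, y m) {μ : ℝ}
    (hstrict : ∀ m, μ * y m ^ d < tensorApply T y m) :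
    ∃ p ∈ collatzWielandtSet T, μ < p.1 := by
  obtain ⟨c, hc, hcy⟩ := exists_pos_of_eventually_nhds_zero <| eventually_all.2 fun m =>
    ((by fun_prop : Continuous fun c => (μ + c) * y m ^ d).tendsto' 0 _
      (by simp)).eventually_lt_const (hstrict m)
  refine ⟨(μ + c, (∑ m, y m)⁻¹ • y), ⟨inv_sum_smul_mem_stdSimplex hy hs, fun m => ?_⟩,
    lt_add_of_pos_right μ hc⟩
  calc (μ + c) * ((∑ m, y m)⁻¹ • y) m ^ d = (∑ m, y m)⁻¹ ^ d * ((μ + c) * y m ^ d) := by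
        simp only [Pi.smul_apply, smul_eq_mul]
        ring
    _ ≤ (∑ m, y m)⁻¹ ^ d * tensorApply T y m := by gcongr; exact (hcy m).le
    _ = tensorApply T ((∑ m, y m)⁻¹ • y) m := (tensorApply_smul T _ y m).symm

lemma tensorApply_eq_of_isMaxOn_collatzWielandtSet (hT : ∀ i j, 0 < T i j) (hd : d ≠ 0)
    {μ : ℝ} (hp : (μ, x) ∈ collatzWielandtSet T)
    (hmax : IsMaxOn Prod.fst (collatzWielandtSet T) (μ, x)) (i : ι) :
    tensorApply T x i = μ * x i ^ d := by
  classical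
  obtain ⟨hx, hfeas⟩ := hp
  by_contra hne
  have hlt : μ * x i ^ d < tensorApply T x i := (hfeas i).lt_of_ne (Ne.symm hne)
  obtain ⟨δ, hδ, hδi⟩ := exists_pos_of_eventually_nhds_zero <|
    ((by fun_prop : Continuous fun t => μ * (x i + t) ^ d).tendsto' 0 _
      (by simp)).eventually_lt_const hlt
  set y := x + Pi.single i δ
  have hxy : x ≤ y := le_add_of_nonneg_right (Pi.single_nonneg.2 hδ.le)
  have hstrict (m : ι) : μ * y m ^ d < tensorApply T y m := by
    by_cases hm : m = i
    · subst hm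
      calc μ * y m ^ d = μ * (x m + δ) ^ d := by simp [y]
        _ < tensorApply T x m := hδi
        _ ≤ tensorApply T y m := tensorApply_mono (fun i j => (hT i j).le) hx.1 hxy m
    · calc μ * y m ^ d = μ * x m ^ d := by simp [y, hm]
        _ ≤ tensorApply T x m := hfeas m
        _ < tensorApply T y m :=
          tensorApply_lt_tensorApply hT hd hx.1 hxy (i₀ := i) (by simp [y, hδ]) m
  have hs : 0 < ∑ m, y m := zero_lt_one.trans_le (hx.2 ▸ Finset.sum_le_sum fun m _ => hxy m)
  obtain ⟨p, hp, hμp⟩ := exists_mem_collatzWielandtSet_gt (le_trans hx.1 hxy) hs hstrict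
  exact (hμp.trans_le (isMaxOn_iff.1 hmax p hp)).false

lemma exists_eigenpair_of_pos (hT : ∀ i j, 0 < T i j) (hd : d ≠ 0) {q : ℝ × (ι → ℝ)}
    (hq : q ∈ collatzWielandtSet T) :
    ∃ μ x, x ∈ stdSimplex ℝ ι ∧ q.1 ≤ μ ∧ ∀ i, tensorApply T x i = μ * x i ^ d := by
  obtain ⟨⟨μ, x⟩, hp, hqp, hmax⟩ := exists_isMaxOn_collatzWielandtSet (fun i j => (hT i j).le) hq
  exact ⟨μ, x, hp.1, hqp, tensorApply_eq_of_isMaxOn_collatzWielandtSet hT hd hp hmax⟩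

lemma exists_eigenpair_of_nonneg (hT : ∀ i j, 0 ≤ T i j) (hd : d ≠ 0) {q : ℝ × (ι → ℝ)}
    (hq : q ∈ collatzWielandtSet T) :
    ∃ μ x, x ∈ stdSimplex ℝ ι ∧ q.1 ≤ μ ∧ ∀ i, tensorApply T x i = μ * x i ^ d := by
  obtain ⟨B, hB⟩ := (finite_range fun i => ∑ j, (T i j + 1)).bddAbove
  set E : Set (ℝ × ℝ × (ι → ℝ)) := (Icc 0 1 ×ˢ Icc q.1 B ×ˢ stdSimplex ℝ ι) ∩
    {e | ∀ i, tensorApply (fun i j => T i j + e.1) e.2.2 i = e.2.1 * e.2.2 i ^ d}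
  have hE : IsCompact E := by
    refine (isCompact_Icc.prod (isCompact_Icc.prod (isCompact_stdSimplex ℝ ι))).inter_right ?_
    simp only [ofPred_forall]
    exact isClosed_iInter fun i => isClosed_eq (by unfold tensorApply; fun_prop) (by fun_prop)
  have hpert : Ioc 0 1 ⊆ Prod.fst '' E := by
    rintro ε ⟨hε, hε1⟩
    have hle : ∀ i j, T i j ≤ T i j + ε := fun i j => by linarith
    obtain ⟨μ, x, hx, hqμ, heig⟩ := exists_eigenpair_of_pos
      (fun i j => (hT i j).trans_lt (by linarith)) hd
      ⟨hq.1, fun i => (hq.2 i).trans (tensorApply_mono_left hle hq.1.1 i)⟩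
    obtain ⟨i, hi⟩ := exists_le_rowSum_of_le_tensorApply (fun i j => (hT i j).trans (hle i j))
      hx.1 (ne_zero_of_mem_stdSimplex hx) fun i => (heig i).ge
    have hμB : μ ≤ B := hi.trans <| (Finset.sum_le_sum fun j _ => by linarith).trans (hB ⟨i, rfl⟩)
    exact ⟨(ε, μ, x), ⟨⟨⟨hε.le, hε1⟩, ⟨hqμ, hμB⟩, hx⟩, heig⟩, rfl⟩
  have h0 : (0 : ℝ) ∈ Prod.fst '' E :=
    (hE.image continuous_fst).isClosed.closure_subset_iff.2 hpert
      (by simp [closure_Ioc zero_ne_one])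
  obtain ⟨⟨_, μ, x⟩, ⟨⟨-, ⟨hqμ, -⟩, hx⟩, heig⟩, rfl⟩ := h0
  exact ⟨μ, x, hx, hqμ, by simpa using heig⟩

lemma exists_eigenpair_of_le_rowSum [Nonempty ι] (hT : ∀ i j, 0 ≤ T i j) (hd : d ≠ 0) {r : ℝ}
    (hr : ∀ i, r ≤ ∑ j, T i j) :
    ∃ μ x, x ∈ stdSimplex ℝ ι ∧ r ≤ μ ∧ ∀ i, tensorApply T x i = μ * x i ^ d := by
  set u : ι → ℝ := fun _ => (Fintype.card ι : ℝ)⁻¹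
  have hu : u ∈ stdSimplex ℝ ι := ⟨fun _ => by positivity, by simp [u]⟩
  refine exists_eigenpair_of_nonneg hT hd (q := (r, u)) ⟨hu, fun i => ?_⟩
  rw [tensorApply_const]
  exact mul_le_mul_of_nonneg_right (hr i) (by positivity)

end Real

/-- For a `k`-th order `n`-dimensional nonnegative tensor `T` (entries
`T i j = T_{i,i₂,…,i_k}` with `j` the tuple of trailing indices), the spectral
radius `ρ` (the maximum modulus of an eigenvalue) is bounded between the
minimum and the maximum row sum. -/
theorem stmt4 (n k : ℕ) (hn : 0 < n) (hk : 2 ≤ k)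
    (T : Fin n → (Fin (k - 1) → Fin n) → ℝ)
    (hT : ∀ i j, 0 ≤ T i j)
    (ρ : ℝ)
    (hρ : IsGreatest {r : ℝ | ∃ (lam : ℂ) (X : Fin n → ℂ), X ≠ 0 ∧
      (∀ i : Fin n, ∑ j : Fin (k - 1) → Fin n,
        (T i j : ℂ) * ∏ l, X (j l) = lam * (X i) ^ (k - 1)) ∧
      ‖lam‖ = r} ρ) :
    Finset.univ.inf' ⟨⟨0, hn⟩, Finset.mem_univ _⟩ (fun i => ∑ j, T i j) ≤ ρ ∧
      ρ ≤ Finset.univ.sup' ⟨⟨0, hn⟩, Finset.mem_univ _⟩ (fun i => ∑ j, T i j) := by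
  have : Nonempty (Fin n) := ⟨⟨0, hn⟩⟩
  constructor
  · set r := Finset.univ.inf' ⟨⟨0, hn⟩, Finset.mem_univ _⟩ fun i => ∑ j, T i j
    have hr : 0 ≤ r := Finset.le_inf' _ _ fun i _ => Finset.sum_nonneg fun j _ => hT i j
    obtain ⟨μ, x, hx, hrμ, heig⟩ := exists_eigenpair_of_le_rowSum (r := r) hT (by omega)
      fun i => Finset.inf'_le _ (Finset.mem_univ i)
    refine hrμ.trans (hρ.2 ⟨μ, fun m => x m, ?_, fun i => ?_, ?_⟩)
    · exact fun h => ne_zero_of_mem_stdSimplex hx (funext fun m => by simpa using congrFun h m)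
    · simpa [tensorApply] using congrArg ((↑) : ℝ → ℂ) (heig i)
    · simp [abs_of_nonneg (hr.trans hrμ)]
  · obtain ⟨μ, X, hX, heig, rfl⟩ := hρ.1
    obtain ⟨i, hi⟩ := exists_norm_le_of_eigen hX heig
    exact Finset.le_sup'_of_le _ (Finset.mem_univ i) (by simpa [abs_of_nonneg (hT i _)] using hi)
end

section
/- Let k ≥ 2, ρ > 1, s ≥ 1, t ≥ 0 be integers with s + t = k - 1, and let x_u, w, f be positive reals satisfying ρ f^{k-1} = f^{s-1} w^t x_u and ρ w^{k-1} = f^s w^{t-1} x_u + (w/ρ)^{k-1}. Then w = x_u / (ρ (1 - ρ^{-k})^{(t+1)/k}) and f = (1 - ρ^{-k})^{1/k} · w; in particular f < w. -/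
/-!
Multiplying the first equation by `f` and the second by `w` makes the term `f^s w^t xu` appear
in both; subtracting gives `ρ (w^k - f^k) = w^k / ρ^(k-1)`, i.e. `f^k = (1 - ρ^(-k)) w^k`.
Taking `k`-th roots gives `f`, and the first equation, reduced to `ρ f^(t+1) = w^t xu`,
then gives `xu = ρ (1 - ρ^(-k))^((t+1)/k) w`.
-/

open Real

lemma zpow_neg_natCast_mem_Ioo {ρ : ℝ} (hρ : 1 < ρ) {k : ℕ} (hk : k ≠ 0) :
    ρ ^ (-(k : ℤ)) ∈ Set.Ioo 0 1 := by
  rw [zpow_neg, zpow_natCast]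
  exact ⟨by positivity, inv_lt_one_of_one_lt₀ (one_lt_pow₀ hρ hk)⟩

lemma mul_pow_succ_eq_of_pendant_eq {s t : ℕ} {ρ xu w f : ℝ} (hf : f ≠ 0)
    (h1 : ρ * f ^ (s + t) = f ^ ((s : ℤ) - 1) * w ^ (t : ℤ) * xu) :
    ρ * f ^ (t + 1) = w ^ t * xu := by
  have h : f ^ s * (ρ * f ^ (t + 1)) = f ^ s * (w ^ t * xu) := by
    rw [zpow_sub_one₀ hf, zpow_natCast, zpow_natCast] at h1
    field_simp at h1
    linear_combination h1
  exact mul_left_cancel₀ (pow_ne_zero s hf) h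

lemma pow_eq_one_sub_zpow_mul_pow_of_eigen_eqs {s t : ℕ} {ρ xu w f : ℝ}
    (hρ : ρ ≠ 0) (hw : w ≠ 0) (hf : f ≠ 0)
    (h1 : ρ * f ^ (s + t) = f ^ ((s : ℤ) - 1) * w ^ (t : ℤ) * xu)
    (h2 : ρ * w ^ (s + t) = f ^ (s : ℤ) * w ^ ((t : ℤ) - 1) * xu + (w / ρ) ^ (s + t)) :
    f ^ (s + t + 1) = (1 - ρ ^ (-((s + t + 1 : ℕ) : ℤ))) * w ^ (s + t + 1) := by
  have e1 := mul_pow_succ_eq_of_pendant_eq hf h1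
  rw [zpow_sub_one₀ hw, zpow_natCast, zpow_natCast, div_pow] at h2
  rw [zpow_neg, zpow_natCast]
  field_simp at h2 ⊢
  linear_combination f ^ s * ρ ^ (s + t) * e1 - h2

lemma eq_rpow_inv_mul_of_pow_eq {k : ℕ} (hk : k ≠ 0) {c w f : ℝ} (hc : 0 ≤ c) (hw : 0 ≤ w)
    (hf : 0 ≤ f) (h : f ^ k = c * w ^ k) : f = c ^ (1 / (k : ℝ)) * w := by
  rw [← pow_rpow_inv_natCast hf hk, h, mul_rpow hc (by positivity),
    pow_rpow_inv_natCast hw hk, one_div]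

lemma rpow_one_div_mul_pow {c w : ℝ} (hc : 0 ≤ c) (k n : ℕ) :
    (c ^ (1 / (k : ℝ)) * w) ^ n = c ^ ((n : ℝ) / k) * w ^ n := by
  rw [mul_pow, ← rpow_natCast, ← rpow_mul hc, one_div_mul_eq_div]

theorem stmt10_general (k s t : ℕ) (hk : 2 ≤ k) (hst : s + t = k - 1)
    (ρ xu w f : ℝ) (hρ : 1 < ρ) (hw : 0 < w) (hf : 0 < f)
    (h1 : ρ * f ^ (k - 1) = f ^ ((s : ℤ) - 1) * w ^ (t : ℤ) * xu)
    (h2 : ρ * w ^ (k - 1) = f ^ (s : ℤ) * w ^ ((t : ℤ) - 1) * xu + (w / ρ) ^ (k - 1)) :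
    w = xu / (ρ * (1 - ρ ^ (-(k : ℤ))) ^ (((t : ℝ) + 1) / (k : ℝ))) ∧
    f = (1 - ρ ^ (-(k : ℤ))) ^ ((1 : ℝ) / (k : ℝ)) * w ∧
    f < w := by
  obtain rfl : k = s + t + 1 := by omega
  rw [Nat.add_sub_cancel] at h1 h2
  obtain ⟨hpos, hlt⟩ := zpow_neg_natCast_mem_Ioo hρ (s + t).succ_ne_zero
  set c := 1 - ρ ^ (-((s + t + 1 : ℕ) : ℤ))
  set n : ℝ := ((s + t + 1 : ℕ) : ℝ)
  have hfw : f = c ^ (1 / n) * w :=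
    eq_rpow_inv_mul_of_pow_eq (s + t).succ_ne_zero (by linarith) hw.le hf.le
      (pow_eq_one_sub_zpow_mul_pow_of_eigen_eqs (by positivity) hw.ne' hf.ne' h1 h2)
  have hxu_eq : xu = ρ * c ^ (((t : ℝ) + 1) / n) * w := by
    have h := mul_pow_succ_eq_of_pendant_eq hf.ne' h1
    rw [hfw, rpow_one_div_mul_pow (by linarith), pow_succ, Nat.cast_succ] at h
    refine mul_left_cancel₀ (pow_ne_zero t hw.ne') ?_
    linear_combination -h
  refine ⟨?_, hfw, ?_⟩
  · have hc_pow : 0 < c ^ (((t : ℝ) + 1) / n) := rpow_pos_of_pos (by linarith) _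
    rw [hxu_eq]
    field_simp
  · calc f = c ^ (1 / n) * w := hfw
      _ < 1 * w := by
        gcongr
        exact rpow_lt_one (by linarith) (by linarith) (by positivity)
      _ = w := one_mul w

/-- Algebraic core of Lemma 3.15: the eigen-equations at the vertices of a
nonpendant edge with `t` attached pendant edges determine the eigenvector
values `w` (degree-2 vertices) and `f` (pendant vertices); in particular
`f < w`. -/
theorem stmt10 (k s t : ℕ) (hk : 2 ≤ k) (hs : 1 ≤ s) (hst : s + t = k - 1)
    (ρ xu w f : ℝ) (hρ : 1 < ρ) (hxu : 0 < xu) (hw : 0 < w) (hf : 0 < f)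
    (h1 : ρ * f ^ (k - 1) = f ^ ((s : ℤ) - 1) * w ^ (t : ℤ) * xu)
    (h2 : ρ * w ^ (k - 1) = f ^ (s : ℤ) * w ^ ((t : ℤ) - 1) * xu + (w / ρ) ^ (k - 1)) :
    w = xu / (ρ * (1 - ρ ^ (-(k : ℤ))) ^ (((t : ℝ) + 1) / (k : ℝ))) ∧
    f = (1 - ρ ^ (-(k : ℤ))) ^ ((1 : ℝ) / (k : ℝ)) * w ∧
    f < w :=
  stmt10_general k s t hk hst ρ xu w f hρ hw hf h1 h2
end
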